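/- arXiv:2603.08542 — 6 statements merged into one kernel-verified Lean document; each statement's English description precedes it below -/
import Mathlib

section
/- Let Λ be a continuous probability density on [0,1] bounded away from 0, and let V: ℝ → ℝ be bounded below with ∫ exp(-V(ε)) dε = 1. Define Z_n = ∫₀¹∫₀¹ √(Λ(x)Λ(y)) exp(-V(n(x-y))) dx dy. Then n · Z_n → 1 as n → ∞. -/
/-!
Substituting `u = n (x - y)` in the inner integral writes `n Z_n` as an integral over
`x ∈ [0, 1]`, `u ∈ ℝ` of `√(Λ x Λ (x - u / n)) q u`, cut off to `u ∈ (n (x - 1), n x]`. For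
`0 < x < 1` the cut-off disappears and the integrand tends to `Λ x q u` as `n → ∞`, while it
stays dominated by `(sup Λ) q u`; dominated convergence and Fubini give the limit
`(∫ Λ) (∫ q) = 1`.
-/

open MeasureTheory Real Filter

open Set Function Topology

noncomputable def rescaledKernel (F : ℝ → ℝ → ℝ) (g : ℝ → ℝ) (a b c : ℝ) (p : ℝ × ℝ) : ℝ :=
  (Ioc (c * (p.1 - b)) (c * (p.1 - a))).indicator (fun u => F p.1 (p.1 - u / c) * g u) p.2

section

variable {a b : ℝ}

lemma mul_setIntegral_Icc_comp_mul_sub (φ : ℝ → ℝ) (hab : a ≤ b) {c : ℝ} (hc : 0 < c) (x : ℝ) :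
    c * ∫ y in Icc a b, φ (c * (x - y)) = ∫ u in Ioc (c * (x - b)) (c * (x - a)), φ u := by
  simp_rw [integral_Icc_eq_integral_Ioc, ← intervalIntegral.integral_of_le hab, mul_sub,
    intervalIntegral.integral_comp_sub_mul φ hc.ne', smul_eq_mul, mul_inv_cancel_left₀ hc.ne']
  exact intervalIntegral.integral_of_le (by gcongr)

variable {F : ℝ → ℝ → ℝ} {g : ℝ → ℝ}

lemma mul_setIntegral_Icc_eq_integral_rescaledKernel (hab : a ≤ b) {c : ℝ} (hc : 0 < c)
    (x : ℝ) :
    c * ∫ y in Icc a b, F x y * g (c * (x - y)) = ∫ u, rescaledKernel F g a b c (x, u) := by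
  have hsubst : ∀ y, F x y * g (c * (x - y)) = F x (x - c * (x - y) / c) * g (c * (x - y)) :=
    fun y => by rw [mul_div_cancel_left₀ _ hc.ne', sub_sub_cancel]
  simp_rw [hsubst, mul_setIntegral_Icc_comp_mul_sub (fun u => F x (x - u / c) * g u) hab hc,
    rescaledKernel, integral_indicator measurableSet_Ioc]

lemma sub_div_mem_Icc_of_mem_Ioc {c x u : ℝ} (hc : 0 < c)
    (hu : u ∈ Ioc (c * (x - b)) (c * (x - a))) : x - u / c ∈ Icc a b := by
  obtain ⟨hub, hua⟩ := hu
  constructor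
  · linarith [(div_le_iff₀' hc).2 hua]
  · linarith [(lt_div_iff₀' hc).2 hub]

lemma abs_rescaledKernel_le {M : ℝ} (hM : ∀ p ∈ Icc a b ×ˢ Icc a b, ‖uncurry F p‖ ≤ M)
    {c x : ℝ} (hc : 0 < c) (hx : x ∈ Icc a b) (u : ℝ) :
    |rescaledKernel F g a b c (x, u)| ≤ M * |g u| := by
  unfold rescaledKernel
  by_cases hu : u ∈ Ioc (c * (x - b)) (c * (x - a))
  · rw [indicator_of_mem hu, abs_mul]
    gcongr
    exact hM (x, _) ⟨hx, sub_div_mem_Icc_of_mem_Ioc hc hu⟩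
  · rw [indicator_of_notMem hu, abs_zero]
    exact mul_nonneg ((norm_nonneg _).trans (hM (x, x) ⟨hx, hx⟩)) (abs_nonneg _)

lemma aestronglyMeasurable_rescaledKernel (hF : Continuous (uncurry F))
    (hg : AEStronglyMeasurable g) (μ : Measure ℝ) (c : ℝ) :
    AEStronglyMeasurable (rescaledKernel F g a b c) (μ.prod volume) := by
  have hset : MeasurableSet {p : ℝ × ℝ | c * (p.1 - b) < p.2 ∧ p.2 ≤ c * (p.1 - a)} := by
    refine (measurableSet_lt ?_ measurable_snd).inter (measurableSet_le measurable_snd ?_) <;>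
      fun_prop
  have hcont : Continuous fun p : ℝ × ℝ => F p.1 (p.1 - p.2 / c) :=
    hF.comp (continuous_fst.prodMk (continuous_fst.sub (continuous_snd.div_const c)))
  exact (hcont.aestronglyMeasurable.mul hg.comp_snd).indicator hset

lemma tendsto_rescaledKernel (hF : Continuous (uncurry F)) {x : ℝ} (hx : x ∈ Ioo a b) (u : ℝ) :
    Tendsto (fun c => rescaledKernel F g a b c (x, u)) atTop (𝓝 (F x x * g u)) := by
  have hmem : ∀ᶠ c in atTop, u ∈ Ioc (c * (x - b)) (c * (x - a)) := by
    filter_upwards [(tendsto_id.atTop_mul_const_of_neg (sub_neg.2 hx.2)).eventually_lt_atBot u,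
      (tendsto_id.atTop_mul_const (sub_pos.2 hx.1)).eventually_ge_atTop u] with c hb ha
    exact ⟨hb, ha⟩
  have hlim : Tendsto (fun c => F x (x - u / c) * g u) atTop (𝓝 (F x x * g u)) := by
    have hshift : Tendsto (fun c => x - u / c) atTop (𝓝 x) := by
      simpa using tendsto_const_nhds.sub (tendsto_const_nhds.div_atTop (tendsto_id (α := ℝ)))
    exact ((hF.tendsto (x, x)).comp (tendsto_const_nhds.prodMk_nhds hshift)).mul_const (g u)
  refine hlim.congr' ?_
  filter_upwards [hmem] with c hc
  rw [rescaledKernel, indicator_of_mem hc]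

theorem tendsto_mul_setIntegral_Icc_Icc_comp_mul_sub (hab : a ≤ b) (hF : Continuous (uncurry F))
    (hg : Integrable g) :
    Tendsto (fun c => c * ∫ x in Icc a b, ∫ y in Icc a b, F x y * g (c * (x - y))) atTop
      (𝓝 ((∫ x in Icc a b, F x x) * ∫ u, g u)) := by
  set μ : Measure ℝ := volume.restrict (Icc a b)
  obtain ⟨M, hM⟩ :=
    ((isCompact_Icc (a := a) (b := b)).prod isCompact_Icc).exists_bound_of_continuousOn
      hF.continuousOn
  have hIoo : ∀ᵐ p ∂μ.prod (volume : Measure ℝ), p.1 ∈ Ioo a b := by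
    refine Measure.quasiMeasurePreserving_fst.ae (p := (· ∈ Ioo a b)) ?_
    rw [show μ = volume.restrict (Ioo a b) from (Measure.restrict_congr_set Ioo_ae_eq_Icc).symm]
    exact ae_restrict_mem measurableSet_Ioo
  have hmeas (c : ℝ) := aestronglyMeasurable_rescaledKernel (a := a) (b := b) hF hg.1 μ c
  have hbound : ∀ c > 0,
      ∀ᵐ p ∂μ.prod (volume : Measure ℝ), ‖rescaledKernel F g a b c p‖ ≤ M * |g p.2| :=
    fun c hc => hIoo.mono fun p hp => abs_rescaledKernel_le hM hc (Ioo_subset_Icc_self hp) p.2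
  have hbound_int : Integrable (fun p : ℝ × ℝ => M * |g p.2|) (μ.prod volume) :=
    (integrable_const M).mul_prod hg.abs
  have hDCT := tendsto_integral_filter_of_dominated_convergence _
    (Eventually.of_forall hmeas) ((eventually_gt_atTop 0).mono hbound) hbound_int
    (hIoo.mono fun p hp => tendsto_rescaledKernel hF hp p.2)
  rw [integral_prod_mul (fun x => F x x) g] at hDCT
  refine hDCT.congr' ((eventually_gt_atTop 0).mono fun c hc => ?_)
  rw [integral_prod _ (hbound_int.mono' (hmeas c) (hbound c hc))]
  dsimp only
  rw [← integral_const_mul]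
  exact integral_congr_ae (Eventually.of_forall fun x =>
    (mul_setIntegral_Icc_eq_integral_rescaledKernel hab hc x).symm)

end

theorem partition_function_limit_general
    (Λ V : ℝ → ℝ) (Λmin : ℝ) (hΛmin : 0 < Λmin)
    (hΛcont : ContinuousOn Λ (Set.Icc 0 1))
    (hΛlb : ∀ x ∈ Set.Icc (0:ℝ) 1, Λmin ≤ Λ x)
    (hΛprob : ∫ x in Set.Icc (0:ℝ) 1, Λ x = 1)
    (hVprob : ∫ ε : ℝ, Real.exp (-V ε) = 1)
    (Z : ℕ → ℝ)
    (hZ : ∀ n : ℕ, Z n =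
      ∫ x in Set.Icc (0:ℝ) 1, ∫ y in Set.Icc (0:ℝ) 1,
        Real.sqrt (Λ x * Λ y) * Real.exp (-V ((n : ℝ) * (x - y)))) :
    Tendsto (fun n : ℕ => (n : ℝ) * Z n) atTop (nhds 1) := by
  set Λ' := IccExtend zero_le_one ((Icc 0 1).domRestrict Λ)
  have hΛ'cont : Continuous Λ' := hΛcont.domRestrict.Icc_extend'
  have hΛ'eq : EqOn Λ' Λ (Icc 0 1) := fun x hx => IccExtend_of_mem _ _ hx
  have hF : Continuous (uncurry fun x y => √(Λ' x * Λ' y)) := by fun_prop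
  have hg : Integrable fun ε => exp (-V ε) := by
    by_contra h
    rw [integral_undef h] at hVprob
    exact zero_ne_one hVprob
  have hdiag : ∫ x in Icc (0 : ℝ) 1, √(Λ' x * Λ' x) = 1 := by
    refine (setIntegral_congr_fun measurableSet_Icc fun x hx => ?_).trans hΛprob
    rw [hΛ'eq hx, sqrt_mul_self (hΛmin.le.trans (hΛlb x hx))]
  have hlim := (tendsto_mul_setIntegral_Icc_Icc_comp_mul_sub zero_le_one hF hg).comp
    tendsto_natCast_atTop_atTop
  rw [hdiag, hVprob, one_mul] at hlim
  refine hlim.congr fun n => ?_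
  rw [comp_apply, hZ n]
  refine congrArg _ (setIntegral_congr_fun measurableSet_Icc fun x hx =>
    setIntegral_congr_fun measurableSet_Icc fun y hy => ?_)
  rw [hΛ'eq hx, hΛ'eq hy]

/-- Let `Λ` be a continuous probability density on `[0,1]` bounded away from `0`, and let
`V : ℝ → ℝ` be measurable, symmetric and bounded below, with `∫ exp(-V ε) dε = 1`.
Define `Z n = ∫₀¹∫₀¹ √(Λ x * Λ y) exp(-V (n (x - y))) dx dy`. Then `n * Z n → 1`. -/
theorem partition_function_limit
    (Λ V : ℝ → ℝ) (Λmin : ℝ) (hΛmin : 0 < Λmin)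
    (hΛcont : ContinuousOn Λ (Set.Icc 0 1))
    (hΛlb : ∀ x ∈ Set.Icc (0:ℝ) 1, Λmin ≤ Λ x)
    (hΛprob : ∫ x in Set.Icc (0:ℝ) 1, Λ x = 1)
    (hVmeas : Measurable V)
    (hVbdd : ∃ c : ℝ, ∀ ε : ℝ, c ≤ V ε)
    (hVsym : ∀ ε : ℝ, V ε = V (-ε))
    (hVprob : ∫ ε : ℝ, Real.exp (-V ε) = 1)
    (Z : ℕ → ℝ)
    (hZ : ∀ n : ℕ, Z n =
      ∫ x in Set.Icc (0:ℝ) 1, ∫ y in Set.Icc (0:ℝ) 1,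
        Real.sqrt (Λ x * Λ y) * Real.exp (-V ((n : ℝ) * (x - y)))) :
    Tendsto (fun n : ℕ => (n : ℝ) * Z n) atTop (nhds 1) :=
  partition_function_limit_general Λ V Λmin hΛmin hΛcont hΛlb hΛprob hVprob Z hZ
end

section
/- Let Λ be a continuous probability density on [0,1] bounded away from 0, V bounded below with ∫ exp(-V) = 1, and p_n(x,y) = (1/Z_n)√(Λ(x)Λ(y))exp(-V(n(x-y))) the joint density on [0,1]². Then for each fixed x ∈ (0,1), the marginal density p_n(x) = ∫₀¹ p_n(x,y) dy converges to Λ(x) as n → ∞. -/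
open MeasureTheory Real Filter

private lemma mdl_key_eq (V g : ℝ → ℝ) (t : ℝ) {n : ℕ} (hn : 1 ≤ n) :
    (n : ℝ) * ∫ y in Set.Icc (0:ℝ) 1, g y * Real.exp (-V ((n:ℝ) * (t - y))) =
      ∫ u : ℝ, Set.indicator (Set.Icc (0:ℝ) 1) g (t - u / (n:ℝ)) * Real.exp (-V u) := by
  have hn0 : (n:ℝ) ≠ 0 := Nat.cast_ne_zero.2 (by omega)
  set ψ : ℝ → ℝ := fun z =>
    Set.indicator (Set.Icc (0:ℝ) 1) g (t - z) * Real.exp (-V ((n:ℝ) * z)) with hψ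
  have h1 : ∫ y in Set.Icc (0:ℝ) 1, g y * Real.exp (-V ((n:ℝ) * (t - y)))
      = ∫ y : ℝ, ψ (t - y) := by
    rw [← MeasureTheory.integral_indicator measurableSet_Icc]
    congr 1; funext y
    have h : t - (t - y) = y := by ring
    rw [hψ]; dsimp only; rw [h]
    by_cases hy : y ∈ Set.Icc (0:ℝ) 1
    · simp [Set.indicator_of_mem hy]
    · simp [Set.indicator_of_notMem hy]
  have h2 : ∫ y : ℝ, ψ (t - y) = ∫ z : ℝ, ψ z := by
    calc ∫ y : ℝ, ψ (t - y) = ∫ y : ℝ, ψ (t + -y) := by simp_rw [sub_eq_add_neg]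
      _ = ∫ y : ℝ, ψ (t + y) :=
          MeasureTheory.integral_neg_eq_self (fun y => ψ (t + y)) volume
      _ = ∫ z : ℝ, ψ z := MeasureTheory.integral_add_left_eq_self ψ t
  have h3 : ∫ z : ℝ, ψ z = (1/(n:ℝ)) * ∫ u : ℝ, ψ (u / (n:ℝ)) := by
    rw [MeasureTheory.Measure.integral_comp_div ψ (n:ℝ), abs_of_nonneg (Nat.cast_nonneg n),
      smul_eq_mul, ← mul_assoc, one_div, inv_mul_cancel₀ hn0, one_mul]
  have h4 : ∫ u : ℝ, ψ (u / (n:ℝ))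
      = ∫ u : ℝ, Set.indicator (Set.Icc (0:ℝ) 1) g (t - u/(n:ℝ)) * Real.exp (-V u) := by
    congr 1; funext u
    have h : (n:ℝ) * (u / (n:ℝ)) = u := by field_simp
    rw [hψ]; dsimp only; rw [h]
  rw [h1, h2, h3, h4, ← mul_assoc, mul_one_div, div_self hn0, one_mul]

private lemma mdl_key_tendsto (V : ℝ → ℝ) (hVmeas : Measurable V)
    (hVint : Integrable (fun u => Real.exp (-V u)))
    (g : ℝ → ℝ) (hg : Continuous g) (C : ℝ) (hC : ∀ y, |g y| ≤ C)
    (t : ℝ) (ht : t ∈ Set.Ioo (0:ℝ) 1) :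
    Tendsto (fun n : ℕ =>
        ∫ u : ℝ, Set.indicator (Set.Icc (0:ℝ) 1) g (t - u / (n:ℝ)) * Real.exp (-V u))
      atTop (nhds (g t * ∫ u : ℝ, Real.exp (-V u))) := by
  have hC0 : 0 ≤ C := (abs_nonneg _).trans (hC 0)
  have hmeasE : Measurable fun u : ℝ => Real.exp (-V u) := (hVmeas.neg).exp
  have key := MeasureTheory.tendsto_integral_of_dominated_convergence
      (μ := (volume : Measure ℝ))
      (F := fun n : ℕ => fun u : ℝ =>
        Set.indicator (Set.Icc (0:ℝ) 1) g (t - u / (n:ℝ)) * Real.exp (-V u))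
      (f := fun u : ℝ => g t * Real.exp (-V u))
      (fun u => C * Real.exp (-V u))
      (by
        intro n
        exact (((hg.measurable.indicator measurableSet_Icc).comp
          (measurable_const.sub (measurable_id.div_const _))).mul hmeasE).aestronglyMeasurable)
      (hVint.const_mul C)
      (by
        intro n
        filter_upwards with u
        rw [Real.norm_eq_abs, abs_mul, abs_of_nonneg (Real.exp_nonneg _)]
        refine mul_le_mul_of_nonneg_right ?_ (Real.exp_nonneg _)
        by_cases h : t - u / (n:ℝ) ∈ Set.Icc (0:ℝ) 1
        · rw [Set.indicator_of_mem h]; exact hC _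
        · rw [Set.indicator_of_notMem h]; simpa using hC0)
      (by
        filter_upwards with u
        have h1 : Tendsto (fun n : ℕ => t - u / (n:ℝ)) atTop (nhds t) := by
          have : Tendsto (fun n : ℕ => u / (n:ℝ)) atTop (nhds 0) :=
            Tendsto.div_atTop tendsto_const_nhds tendsto_natCast_atTop_atTop
          simpa using tendsto_const_nhds.sub this
        have h2 : ∀ᶠ n : ℕ in atTop, t - u / (n:ℝ) ∈ Set.Ioo (0:ℝ) 1 :=
          h1.eventually (isOpen_Ioo.mem_nhds ht)
        have h3 : Tendsto (fun n : ℕ => Set.indicator (Set.Icc (0:ℝ) 1) g (t - u / (n:ℝ)))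
            atTop (nhds (g t)) := by
          refine Tendsto.congr' ?_ ((hg.tendsto t).comp h1)
          filter_upwards [h2] with n hn
          exact (Set.indicator_of_mem (Set.Ioo_subset_Icc_self hn) g).symm
        exact h3.mul tendsto_const_nhds)
  rwa [MeasureTheory.integral_const_mul] at key

private lemma mdl_inner (V : ℝ → ℝ) (hVmeas : Measurable V)
    (hVint : Integrable (fun u => Real.exp (-V u)))
    (g : ℝ → ℝ) (hg : Continuous g) (C : ℝ) (hC : ∀ y, |g y| ≤ C)
    (t : ℝ) (ht : t ∈ Set.Ioo (0:ℝ) 1) :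
    Tendsto (fun n : ℕ =>
        (n : ℝ) * ∫ y in Set.Icc (0:ℝ) 1, g y * Real.exp (-V ((n:ℝ) * (t - y))))
      atTop (nhds (g t * ∫ u : ℝ, Real.exp (-V u))) := by
  refine Tendsto.congr' ?_ (mdl_key_tendsto V hVmeas hVint g hg C hC t ht)
  filter_upwards [eventually_ge_atTop 1] with n hn
  exact (mdl_key_eq V g t hn).symm

private lemma mdl_bound (V : ℝ → ℝ) (hVmeas : Measurable V)
    (hVint : Integrable (fun u => Real.exp (-V u)))
    (g : ℝ → ℝ) (hgm : Measurable g) (C : ℝ) (hC : ∀ y, |g y| ≤ C)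
    (t : ℝ) {n : ℕ} (hn : 1 ≤ n) :
    |(n : ℝ) * ∫ y in Set.Icc (0:ℝ) 1, g y * Real.exp (-V ((n:ℝ) * (t - y)))|
      ≤ C * ∫ u : ℝ, Real.exp (-V u) := by
  rw [mdl_key_eq V g t hn]
  have h1 := MeasureTheory.norm_integral_le_integral_norm
    (fun u : ℝ => Set.indicator (Set.Icc (0:ℝ) 1) g (t - u / (n:ℝ)) * Real.exp (-V u))
    (μ := (volume : Measure ℝ))
  rw [Real.norm_eq_abs] at h1
  refine h1.trans ?_
  have h2 : (∫ u : ℝ, ‖Set.indicator (Set.Icc (0:ℝ) 1) g (t - u / (n:ℝ)) * Real.exp (-V u)‖)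
      ≤ ∫ u : ℝ, C * Real.exp (-V u) := by
    refine MeasureTheory.integral_mono_of_nonneg ?_ (hVint.const_mul C) ?_
    · filter_upwards with u; exact norm_nonneg _
    · filter_upwards with u
      rw [Real.norm_eq_abs, abs_mul, abs_of_nonneg (Real.exp_nonneg _)]
      refine mul_le_mul_of_nonneg_right ?_ (Real.exp_nonneg _)
      by_cases h : t - u / (n:ℝ) ∈ Set.Icc (0:ℝ) 1
      · rw [Set.indicator_of_mem h]; exact hC _
      · rw [Set.indicator_of_notMem h]
        simpa using (abs_nonneg (g 0)).trans (hC 0)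
  refine h2.trans ?_
  rw [MeasureTheory.integral_const_mul]

private lemma mdl_sqrt_bd {Λ' : ℝ → ℝ} {Λmin B : ℝ} (hΛmin : 0 < Λmin)
    (hΛ'lb : ∀ y, Λmin ≤ Λ' y) (hΛ'ub : ∀ y, Λ' y ≤ B) (u v : ℝ) :
    |Real.sqrt (Λ' u * Λ' v)| ≤ B := by
  have hB0 : 0 < B := hΛmin.trans_le ((hΛ'lb u).trans (hΛ'ub u))
  rw [abs_of_nonneg (Real.sqrt_nonneg _)]
  calc Real.sqrt (Λ' u * Λ' v) ≤ Real.sqrt (B * B) :=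
        Real.sqrt_le_sqrt (mul_le_mul (hΛ'ub u) (hΛ'ub v)
          ((hΛmin.trans_le (hΛ'lb v)).le) hB0.le)
    _ = B := Real.sqrt_mul_self hB0.le

private lemma mdl_inner' (V : ℝ → ℝ) (hVmeas : Measurable V)
    (hVint : Integrable (fun u => Real.exp (-V u)))
    (hVprob : ∫ ε : ℝ, Real.exp (-V ε) = 1)
    (Λ' : ℝ → ℝ) (hΛ'c : Continuous Λ') {Λmin B : ℝ} (hΛmin : 0 < Λmin)
    (hΛ'lb : ∀ y, Λmin ≤ Λ' y) (hΛ'ub : ∀ y, Λ' y ≤ B)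
    (t : ℝ) (ht : t ∈ Set.Ioo (0:ℝ) 1) :
    Tendsto (fun n : ℕ =>
        (n : ℝ) * ∫ y in Set.Icc (0:ℝ) 1,
          Real.sqrt (Λ' t * Λ' y) * Real.exp (-V ((n:ℝ) * (t - y))))
      atTop (nhds (Λ' t)) := by
  have h := mdl_inner V hVmeas hVint (fun y => Real.sqrt (Λ' t * Λ' y))
    (Real.continuous_sqrt.comp (continuous_const.mul hΛ'c)) B
    (fun y => mdl_sqrt_bd hΛmin hΛ'lb hΛ'ub t y) t ht
  beta_reduce at h
  rwa [hVprob, mul_one,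
    Real.sqrt_mul_self ((hΛmin.trans_le (hΛ'lb t)).le)] at h

private lemma mdl_nZ (V : ℝ → ℝ) (hVmeas : Measurable V)
    (hVint : Integrable (fun u => Real.exp (-V u)))
    (hVprob : ∫ ε : ℝ, Real.exp (-V ε) = 1)
    (Λ' : ℝ → ℝ) (hΛ'c : Continuous Λ') {Λmin B : ℝ} (hΛmin : 0 < Λmin)
    (hΛ'lb : ∀ y, Λmin ≤ Λ' y) (hΛ'ub : ∀ y, Λ' y ≤ B) :
    Tendsto (fun n : ℕ => ∫ t in Set.Icc (0:ℝ) 1,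
        (n : ℝ) * ∫ y in Set.Icc (0:ℝ) 1,
          Real.sqrt (Λ' t * Λ' y) * Real.exp (-V ((n:ℝ) * (t - y))))
      atTop (nhds (∫ t in Set.Icc (0:ℝ) 1, Λ' t)) := by
  have hB0 : 0 < B := hΛmin.trans_le ((hΛ'lb 0).trans (hΛ'ub 0))
  have hae_Ioo : ∀ᵐ t ∂(volume.restrict (Set.Icc (0:ℝ) 1)), t ∈ Set.Ioo (0:ℝ) 1 := by
    have hnull : volume.restrict (Set.Icc (0:ℝ) 1) ((Set.Ioo (0:ℝ) 1)ᶜ) = 0 := by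
      rw [Measure.restrict_apply measurableSet_Ioo.compl]
      refine measure_mono_null (fun t ht => ?_)
        (((Set.countable_singleton (1:ℝ)).insert 0).measure_zero volume)
      rcases eq_or_lt_of_le ht.2.1 with h0 | h0
      · exact Set.mem_insert_iff.2 (Or.inl h0.symm)
      · rcases eq_or_lt_of_le ht.2.2 with h1 | h1
        · exact Set.mem_insert_iff.2 (Or.inr (by simp [h1]))
        · exact absurd ⟨h0, h1⟩ ht.1
    exact MeasureTheory.ae_iff.2 hnull
  refine MeasureTheory.tendsto_integral_of_dominated_convergence
    (fun _ => B * ∫ u : ℝ, Real.exp (-V u)) ?_ (MeasureTheory.integrable_const _) ?_ ?_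
  · intro n
    refine (StronglyMeasurable.const_mul ?_ _).aestronglyMeasurable
    have hjm : StronglyMeasurable (fun p : ℝ × ℝ =>
        Real.sqrt (Λ' p.1 * Λ' p.2) * Real.exp (-V ((n:ℝ) * (p.1 - p.2)))) := by
      refine Measurable.stronglyMeasurable (Measurable.mul ?_ ?_)
      · exact (Real.continuous_sqrt.comp
          ((hΛ'c.comp continuous_fst).mul (hΛ'c.comp continuous_snd))).measurable
      · exact ((hVmeas.comp ((measurable_fst.sub measurable_snd).const_mul
          ((n:ℝ)))).neg).exp
    exact hjm.integral_prod_right'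
  · intro n
    filter_upwards with t
    rw [Real.norm_eq_abs]
    rcases Nat.eq_zero_or_pos n with h0 | h1
    · subst h0
      simp only [Nat.cast_zero, zero_mul, abs_zero]
      have : 0 < ∫ u : ℝ, Real.exp (-V u) := by rw [hVprob]; norm_num
      positivity
    · exact mdl_bound V hVmeas hVint _
        ((Real.continuous_sqrt.comp (continuous_const.mul hΛ'c)).measurable) B
        (fun y => mdl_sqrt_bd hΛmin hΛ'lb hΛ'ub t y) t h1
  · filter_upwards [hae_Ioo] with t ht
    exact mdl_inner' V hVmeas hVint hVprob Λ' hΛ'c hΛmin hΛ'lb hΛ'ub t ht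

set_option maxHeartbeats 2000000 in
/-- With `p_n(x,y) = (1/Z_n) √(Λ x * Λ y) exp(-V (n (x-y)))` the joint density on `[0,1]²`,
for each fixed `x ∈ (0,1)`, the marginal density `p_n(x) = ∫₀¹ p_n(x,y) dy` converges to
`Λ x` as `n → ∞`. -/
theorem marginal_density_limit
    (Λ V : ℝ → ℝ) (Λmin : ℝ) (hΛmin : 0 < Λmin)
    (hΛcont : ContinuousOn Λ (Set.Icc 0 1))
    (hΛlb : ∀ x ∈ Set.Icc (0:ℝ) 1, Λmin ≤ Λ x)
    (hΛprob : ∫ x in Set.Icc (0:ℝ) 1, Λ x = 1)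
    (hVmeas : Measurable V)
    (hVbdd : ∃ c : ℝ, ∀ ε : ℝ, c ≤ V ε)
    (hVsym : ∀ ε : ℝ, V ε = V (-ε))
    (hVprob : ∫ ε : ℝ, Real.exp (-V ε) = 1)
    (Z : ℕ → ℝ)
    (hZ : ∀ n : ℕ, Z n =
      ∫ x in Set.Icc (0:ℝ) 1, ∫ y in Set.Icc (0:ℝ) 1,
        Real.sqrt (Λ x * Λ y) * Real.exp (-V ((n : ℝ) * (x - y))))
    (x : ℝ) (hx : x ∈ Set.Ioo (0:ℝ) 1) :
    Tendsto (fun n : ℕ =>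
        ∫ y in Set.Icc (0:ℝ) 1,
          (1 / Z n) * (Real.sqrt (Λ x * Λ y) * Real.exp (-V ((n : ℝ) * (x - y)))))
      atTop (nhds (Λ x)) := by
  have hxI : x ∈ Set.Icc (0:ℝ) 1 := ⟨hx.1.le, hx.2.le⟩
  have hVint : Integrable (fun u => Real.exp (-V u)) := by
    by_contra h
    rw [MeasureTheory.integral_undef h] at hVprob
    norm_num at hVprob
  obtain ⟨B, hB0, hΛub⟩ : ∃ B : ℝ, 0 < B ∧ ∀ z ∈ Set.Icc (0:ℝ) 1, Λ z ≤ B := by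
    obtain ⟨M, hMmem, hM⟩ := isCompact_Icc.exists_isMaxOn
      (Set.nonempty_Icc.2 zero_le_one) hΛcont
    exact ⟨Λ M, hΛmin.trans_le (hΛlb M hMmem), fun z hz => hM hz⟩
  obtain ⟨Λ', hΛ'c, hΛ'eq, hΛ'lb, hΛ'ub⟩ :
      ∃ Λ' : ℝ → ℝ, Continuous Λ' ∧ (∀ y ∈ Set.Icc (0:ℝ) 1, Λ' y = Λ y) ∧
        (∀ y, Λmin ≤ Λ' y) ∧ (∀ y, Λ' y ≤ B) := by
    have hc_mem : ∀ y : ℝ, max 0 (min y 1) ∈ Set.Icc (0:ℝ) 1 := fun y =>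
      ⟨le_max_left _ _, max_le zero_le_one (min_le_right _ _)⟩
    refine ⟨fun y => Λ (max 0 (min y 1)),
      hΛcont.comp_continuous (continuous_const.max (continuous_id.min continuous_const)) hc_mem,
      fun y hy => by show Λ (max 0 (min y 1)) = Λ y; rw [min_eq_left hy.2, max_eq_right hy.1],
      fun y => hΛlb _ (hc_mem y), fun y => hΛub _ (hc_mem y)⟩
  -- inner convergence at x
  have hIx : Tendsto (fun n : ℕ =>
      (n : ℝ) * ∫ y in Set.Icc (0:ℝ) 1,
        Real.sqrt (Λ' x * Λ' y) * Real.exp (-V ((n:ℝ) * (x - y))))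
      atTop (nhds (Λ' x)) :=
    mdl_inner' V hVmeas hVint hVprob Λ' hΛ'c hΛmin hΛ'lb hΛ'ub x hx
  -- convergence of n * Z n
  have hnZ : Tendsto (fun n : ℕ => (n : ℝ) * Z n) atTop (nhds 1) := by
    have hrw : ∀ n : ℕ, (n : ℝ) * Z n = ∫ t in Set.Icc (0:ℝ) 1,
        (n : ℝ) * ∫ y in Set.Icc (0:ℝ) 1,
          Real.sqrt (Λ' t * Λ' y) * Real.exp (-V ((n:ℝ) * (t - y))) := by
      intro n
      have e : ∫ t in Set.Icc (0:ℝ) 1, ∫ y in Set.Icc (0:ℝ) 1,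
            Real.sqrt (Λ t * Λ y) * Real.exp (-V ((n:ℝ) * (t - y)))
          = ∫ t in Set.Icc (0:ℝ) 1, ∫ y in Set.Icc (0:ℝ) 1,
            Real.sqrt (Λ' t * Λ' y) * Real.exp (-V ((n:ℝ) * (t - y))) :=
        MeasureTheory.setIntegral_congr_fun measurableSet_Icc (fun t ht =>
          MeasureTheory.setIntegral_congr_fun measurableSet_Icc (fun y hy => by
            rw [hΛ'eq t ht, hΛ'eq y hy]))
      rw [hZ n, e, ← MeasureTheory.integral_const_mul]
    have hlim : ∫ t in Set.Icc (0:ℝ) 1, Λ' t = 1 := by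
      have h : ∫ t in Set.Icc (0:ℝ) 1, Λ' t = ∫ t in Set.Icc (0:ℝ) 1, Λ t :=
        MeasureTheory.setIntegral_congr_fun measurableSet_Icc (fun t ht => hΛ'eq t ht)
      rw [h, hΛprob]
    have hdct := mdl_nZ V hVmeas hVint hVprob Λ' hΛ'c hΛmin hΛ'lb hΛ'ub
    rw [hlim] at hdct
    exact hdct.congr' (by filter_upwards with n using (hrw n).symm)
  -- assemble
  have hratio : Tendsto (fun n : ℕ =>
      ((n : ℝ) * ∫ y in Set.Icc (0:ℝ) 1,
        Real.sqrt (Λ' x * Λ' y) * Real.exp (-V ((n:ℝ) * (x - y)))) / ((n : ℝ) * Z n))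
      atTop (nhds (Λ' x)) := by
    have h := hIx.div hnZ one_ne_zero
    rwa [div_one] at h
  rw [← hΛ'eq x hxI]
  refine Tendsto.congr' ?_ hratio
  filter_upwards [eventually_ge_atTop 1] with n hn
  have hn0 : (n : ℝ) ≠ 0 := Nat.cast_ne_zero.2 (by omega)
  rw [mul_div_mul_left _ _ hn0]
  have h1 : ∫ y in Set.Icc (0:ℝ) 1,
      (1 / Z n) * (Real.sqrt (Λ' x * Λ y) * Real.exp (-V ((n:ℝ) * (x - y))))
      = (1 / Z n) * ∫ y in Set.Icc (0:ℝ) 1,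
          Real.sqrt (Λ' x * Λ' y) * Real.exp (-V ((n:ℝ) * (x - y))) := by
    have h0 : ∫ y in Set.Icc (0:ℝ) 1,
          Real.sqrt (Λ' x * Λ y) * Real.exp (-V ((n:ℝ) * (x - y)))
        = ∫ y in Set.Icc (0:ℝ) 1,
          Real.sqrt (Λ' x * Λ' y) * Real.exp (-V ((n:ℝ) * (x - y))) :=
      MeasureTheory.setIntegral_congr_fun measurableSet_Icc (fun y hy => by rw [hΛ'eq y hy])
    rw [MeasureTheory.integral_const_mul, h0]
  rw [h1, one_div_mul_eq_div]
end

section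
/- Let g: ℝ → ℝ be convex, and let x₁ ≤ x₂ ≤ ... ≤ x_n and y₁ ≤ y₂ ≤ ... ≤ y_n be two sorted sequences of reals. Then for any permutation π of {1,...,n}, ∑ᵢ g(xᵢ - yᵢ) ≤ ∑ᵢ g(xᵢ - y_{π(i)}). That is, the identity matching of sorted values minimizes the total convex cost over all permutations. -/
/-!
The cost array `F i j = g (x i - y j)` has the Monge property
`F a c + F b d ≤ F a d + F b c` for `a ≤ b`, `c ≤ d`: the arguments on the left have the same sum
as those on the right and lie between them, so this is convexity of `g`. For a Monge array the
identity is an optimal assignment: if `a` is the least point moved by `σ`, composing `σ` with the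
transposition that makes it fix `a` shrinks its support and, by the Monge inequality at rows
`a ≤ σ⁻¹ a` and columns `a ≤ σ a`, does not increase the cost.
-/

open Finset Equiv Equiv.Perm

theorem ConvexOn.map_add_map_le_of_add_eq {s : Set ℝ} {g : ℝ → ℝ} (hg : ConvexOn ℝ s g)
    {p q u v : ℝ} (hp : p ∈ s) (hq : q ∈ s) (hpu : p ≤ u) (huq : u ≤ q) (huv : u + v = p + q) :
    g u + g v ≤ g p + g q := by
  rcases hpu.eq_or_lt with rfl | hpu
  · obtain rfl : v = q := by linarith
    rfl
  have hpq : 0 < q - p := by linarith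
  -- `u` and `v` are the convex combinations of `p`, `q` with weights `(t, 1 - t)` and `(1 - t, t)`.
  set t := (q - u) / (q - p) with ht
  have ht₀ : 0 ≤ t := div_nonneg (by linarith) hpq.le
  have ht₁ : 0 ≤ 1 - t := by rw [sub_nonneg, div_le_one hpq]; linarith
  have hu : t • p + (1 - t) • q = u := by simp only [smul_eq_mul, ht]; field_simp; ring
  have hv : (1 - t) • p + t • q = v := by
    rw [show v = p + q - u by linarith]; simp only [smul_eq_mul, ht]; field_simp; ring
  have h₁ := hg.2 hp hq ht₀ ht₁ (by ring)
  have h₂ := hg.2 hp hq ht₁ ht₀ (by ring)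
  rw [hu] at h₁
  rw [hv] at h₂
  simp only [smul_eq_mul] at h₁ h₂
  linarith

def IsMonge {ι κ : Type*} [Preorder ι] [Preorder κ] (F : ι → κ → ℝ) : Prop :=
  ∀ ⦃a b : ι⦄ ⦃c d : κ⦄, a ≤ b → c ≤ d → F a c + F b d ≤ F a d + F b c

theorem ConvexOn.isMonge_comp_sub {ι κ : Type*} [Preorder ι] [Preorder κ] {g : ℝ → ℝ}
    (hg : ConvexOn ℝ Set.univ g) {x : ι → ℝ} {y : κ → ℝ} (hx : Monotone x) (hy : Monotone y) :
    IsMonge fun i j => g (x i - y j) := by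
  intro a b c d hab hcd
  exact hg.map_add_map_le_of_add_eq trivial trivial (by linarith [hy hcd]) (by linarith [hx hab])
    (by ring)

theorem sum_comp_mul_swap_add {ι M : Type*} [Fintype ι] [DecidableEq ι] [AddCommGroup M]
    (F : ι → ι → M) (σ : Perm ι) (a b : ι) :
    ∑ i, F i ((σ * swap a b) i) + (F a (σ a) + F b (σ b)) =
      ∑ i, F i (σ i) + (F a (σ b) + F b (σ a)) := by
  rcases eq_or_ne a b with rfl | hab
  · simp
  have hdiff : ∑ i, (F i ((σ * swap a b) i) - F i (σ i)) =
      (F a (σ b) - F a (σ a)) + (F b (σ a) - F b (σ b)) := by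
    rw [Fintype.sum_eq_add a b hab fun i hi => by
      simp [swap_apply_of_ne_of_ne hi.1 hi.2]]
    simp
  rw [sum_sub_distrib, sub_eq_iff_eq_add] at hdiff
  rw [hdiff]
  abel

theorem IsMonge.sum_le_sum_comp_perm {ι : Type*} [LinearOrder ι] [Fintype ι] {F : ι → ι → ℝ}
    (hF : IsMonge F) (σ : Perm ι) : ∑ i, F i i ≤ ∑ i, F i (σ i) := by
  classical
  induction h : #σ.support using Nat.strong_induction_on generalizing σ with
  | _ m ih =>
  rcases σ.support.eq_empty_or_nonempty with hσ | hσ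
  · simp [support_eq_empty_iff.mp hσ]
  set a := σ.support.min' hσ
  have ha : a ∈ σ.support := min'_mem _ _
  set k := σ⁻¹ a
  have hσk : σ k = a := by simp [k]
  have hk : k ∈ σ.support := apply_mem_support.mp (hσk ▸ ha)
  have hτ : swap a (σ a) * σ = σ * swap k a := by simp [swap_mul_eq_mul_swap, k]
  have hexchange := hF (min'_le _ _ hk) (min'_le _ _ (apply_mem_support.mpr ha))
  have hsum := sum_comp_mul_swap_add F σ k a
  rw [hσk] at hsum
  calc ∑ i, F i i ≤ ∑ i, F i ((swap a (σ a) * σ) i) :=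
        ih _ (h ▸ card_support_swap_mul (mem_support.mp ha)) _ rfl
    _ ≤ ∑ i, F i (σ i) := by rw [hτ]; linarith

/-- For a convex cost `g` and two nondecreasing sequences `x`, `y` of length `n`,
the identity matching of sorted values minimizes the total convex cost over all
permutations: `∑ i, g (x i - y i) ≤ ∑ i, g (x i - y (π i))`. -/
theorem convex_sorted_matching_min (g : ℝ → ℝ) (hg : ConvexOn ℝ Set.univ g)
    (n : ℕ) (x y : Fin n → ℝ) (hx : Monotone x) (hy : Monotone y)
    (π : Equiv.Perm (Fin n)) :
    ∑ i : Fin n, g (x i - y i) ≤ ∑ i : Fin n, g (x i - y (π i)) :=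
  (hg.isMonge_comp_sub hx hy).sum_le_sum_comp_perm π
end

section
/- Consider the Gibbs measure P(π) ∝ exp(-∑_{j=1}^n V(n(X_j - Y_{π(j)}))) over bijections π: {1,...,n} → {1,...,n}, for fixed distinct reals X₁,...,X_n and Y₁,...,Y_n and any function V: ℝ → ℝ. Fix i ∈ {1,...,n} and let s, t be the permutations sorting X and Y respectively. Conditional on the event that no sorted-index pair (k, (t⁻¹∘π∘s)(k)) crosses level i (i.e., for all k: k ≤ i iff (t⁻¹∘π∘s)(k) ≤ i), the restrictions of t⁻¹∘π∘s to {1,...,i} and to {i+1,...,n} are independent under P. -/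
open Finset

section Aux

variable {n : ℕ}

private def gfun (i : Fin n) (σ ρ : Equiv.Perm (Fin n)) : Fin n → Fin n :=
  fun k => if k ≤ i then σ k else ρ k

private lemma gfun_inj (i : Fin n) (σ ρ : Equiv.Perm (Fin n))
    (hσ : ∀ k, σ k ≤ i ↔ k ≤ i) (hρ : ∀ k, ρ k ≤ i ↔ k ≤ i) :
    Function.Injective (gfun i σ ρ) := by
  intro a b h
  by_cases ha : a ≤ i <;> by_cases hb : b ≤ i <;>
    simp only [gfun, ha, hb, if_true, if_false, if_pos, if_neg, not_false_iff] at h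
  · exact σ.injective h
  · exact absurd ((hρ b).1 (by rw [← h]; exact (hσ a).2 ha)) hb
  · exact absurd ((hρ a).1 (by rw [h]; exact (hσ b).2 hb)) ha
  · exact ρ.injective h

open Classical in
private noncomputable def glue (i : Fin n) (σ ρ : Equiv.Perm (Fin n)) : Equiv.Perm (Fin n) :=
  if h : (∀ k, σ k ≤ i ↔ k ≤ i) ∧ (∀ k, ρ k ≤ i ↔ k ≤ i) then
    Equiv.ofBijective _ (Finite.injective_iff_bijective.1 (gfun_inj i σ ρ h.1 h.2))
  else σ

private lemma glue_apply {i : Fin n} {σ ρ : Equiv.Perm (Fin n)}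
    (hσ : ∀ k, σ k ≤ i ↔ k ≤ i) (hρ : ∀ k, ρ k ≤ i ↔ k ≤ i) (k : Fin n) :
    glue i σ ρ k = if k ≤ i then σ k else ρ k := by
  classical
  simp [glue, dif_pos (⟨hσ, hρ⟩ : _ ∧ _), gfun]

private lemma glue_mem {i : Fin n} {σ ρ : Equiv.Perm (Fin n)}
    (hσ : ∀ k, σ k ≤ i ↔ k ≤ i) (hρ : ∀ k, ρ k ≤ i ↔ k ≤ i) (k : Fin n) :
    glue i σ ρ k ≤ i ↔ k ≤ i := by
  rw [glue_apply hσ hρ]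
  by_cases hk : k ≤ i <;> simp [hk, hσ k, hρ k]

private lemma glue_glue {i : Fin n} {σ ρ : Equiv.Perm (Fin n)}
    (hσ : ∀ k, σ k ≤ i ↔ k ≤ i) (hρ : ∀ k, ρ k ≤ i ↔ k ≤ i) :
    glue i (glue i σ ρ) (glue i ρ σ) = σ := by
  ext k
  rw [glue_apply (glue_mem hσ hρ) (glue_mem hρ hσ)]
  by_cases hk : k ≤ i
  · rw [if_pos hk, glue_apply hσ hρ, if_pos hk]
  · rw [if_neg hk, glue_apply hρ hσ, if_neg hk]

open Classical in
private lemma core (i : Fin n) (g : Fin n → Fin n → ℝ)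
    (A' B' : Equiv.Perm (Fin n) → Prop)
    (hA' : ∀ σ σ' : Equiv.Perm (Fin n), (∀ k, k ≤ i → σ k = σ' k) → (A' σ ↔ A' σ'))
    (hB' : ∀ σ σ' : Equiv.Perm (Fin n), (∀ k, i < k → σ k = σ' k) → (B' σ ↔ B' σ')) :
    (∑ σ : Equiv.Perm (Fin n),
        if (∀ k, σ k ≤ i ↔ k ≤ i) ∧ A' σ ∧ B' σ then ∏ k, g k (σ k) else 0)
      * (∑ σ : Equiv.Perm (Fin n),
        if (∀ k, σ k ≤ i ↔ k ≤ i) then ∏ k, g k (σ k) else 0)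
    = (∑ σ : Equiv.Perm (Fin n),
        if (∀ k, σ k ≤ i ↔ k ≤ i) ∧ A' σ then ∏ k, g k (σ k) else 0)
      * (∑ σ : Equiv.Perm (Fin n),
        if (∀ k, σ k ≤ i ↔ k ≤ i) ∧ B' σ then ∏ k, g k (σ k) else 0) := by
  rw [Finset.sum_mul_sum, Finset.sum_mul_sum]
  rw [← Finset.sum_product', ← Finset.sum_product', Finset.univ_product_univ]
  have hΦ : Function.Bijective
      (fun p : Equiv.Perm (Fin n) × Equiv.Perm (Fin n) => (glue i p.1 p.2, glue i p.2 p.1)) := by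
    apply Function.Involutive.bijective
    rintro ⟨σ, ρ⟩
    by_cases h : (∀ k, σ k ≤ i ↔ k ≤ i) ∧ (∀ k, ρ k ≤ i ↔ k ≤ i)
    · simp only [Prod.mk.injEq]
      exact ⟨glue_glue h.1 h.2, glue_glue h.2 h.1⟩
    · have h1 : glue i σ ρ = σ := dif_neg h
      have h2 : glue i ρ σ = ρ := dif_neg (fun hc => h ⟨hc.2, hc.1⟩)
      simp only [h1, h2]
  refine Fintype.sum_bijective _ hΦ _ _ fun p => ?_
  obtain ⟨σ, ρ⟩ := p
  dsimp only
  by_cases h : (∀ k, σ k ≤ i ↔ k ≤ i) ∧ (∀ k, ρ k ≤ i ↔ k ≤ i)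
  · obtain ⟨hσ, hρ⟩ := h
    have hAg : A' (glue i σ ρ) ↔ A' σ := by
      refine hA' _ _ fun k hk => ?_
      rw [glue_apply hσ hρ, if_pos hk]
    have hBg : B' (glue i ρ σ) ↔ B' σ := by
      refine hB' _ _ fun k hk => ?_
      rw [glue_apply hρ hσ, if_neg (not_le.2 hk)]
    by_cases hAσ : A' σ <;> by_cases hBσ : B' σ
    · rw [if_pos ⟨hσ, hAσ, hBσ⟩, if_pos hρ,
        if_pos ⟨glue_mem hσ hρ, hAg.2 hAσ⟩, if_pos ⟨glue_mem hρ hσ, hBg.2 hBσ⟩]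
      rw [← Finset.prod_mul_distrib, ← Finset.prod_mul_distrib]
      refine Finset.prod_congr rfl fun k _ => ?_
      rw [glue_apply hσ hρ, glue_apply hρ hσ]
      by_cases hk : k ≤ i
      · rw [if_pos hk, if_pos hk]
      · rw [if_neg hk, if_neg hk, mul_comm]
    · have hL : ¬((∀ k, σ k ≤ i ↔ k ≤ i) ∧ A' σ ∧ B' σ) := fun hc => hBσ hc.2.2
      have hR : ¬((∀ k, (glue i ρ σ) k ≤ i ↔ k ≤ i) ∧ B' (glue i ρ σ)) :=
        fun hc => hBσ (hBg.1 hc.2)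
      rw [if_neg hL, if_neg hR]
      simp
    · have hL : ¬((∀ k, σ k ≤ i ↔ k ≤ i) ∧ A' σ ∧ B' σ) := fun hc => hAσ hc.2.1
      have hR : ¬((∀ k, (glue i σ ρ) k ≤ i ↔ k ≤ i) ∧ A' (glue i σ ρ)) :=
        fun hc => hAσ (hAg.1 hc.2)
      rw [if_neg hL, if_neg hR]
      simp
    · have hL : ¬((∀ k, σ k ≤ i ↔ k ≤ i) ∧ A' σ ∧ B' σ) := fun hc => hAσ hc.2.1
      have hR : ¬((∀ k, (glue i σ ρ) k ≤ i ↔ k ≤ i) ∧ A' (glue i σ ρ)) :=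
        fun hc => hAσ (hAg.1 hc.2)
      rw [if_neg hL, if_neg hR]
      simp
  · have h1 : glue i σ ρ = σ := dif_neg h
    have h2 : glue i ρ σ = ρ := dif_neg (fun hc => h ⟨hc.2, hc.1⟩)
    rw [h1, h2]
    rcases not_and_or.1 h with hc | hc
    · have hL : ¬((∀ k, σ k ≤ i ↔ k ≤ i) ∧ A' σ ∧ B' σ) := fun hx => hc hx.1
      have hR : ¬((∀ k, σ k ≤ i ↔ k ≤ i) ∧ A' σ) := fun hx => hc hx.1
      rw [if_neg hL, if_neg hR]
      simp
    · have hL : ¬(∀ k, ρ k ≤ i ↔ k ≤ i) := hc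
      have hR : ¬((∀ k, ρ k ≤ i ↔ k ≤ i) ∧ B' ρ) := fun hx => hc hx.1
      rw [if_neg hL, if_neg hR]
      simp

end Aux

/-- Conditional independence across an empty boundary in the exact matching Gibbs measure.
For the Gibbs measure `P(π) ∝ exp(-∑ⱼ V(n(Xⱼ - Y_{π(j)})))` over bijections of `{1,…,n}`,
with `s, t` the sorting permutations of the distinct values `X`, `Y` and
`π_{st} = t⁻¹ ∘ π ∘ s`, conditional on the event `E` that no sorted-index pair crosses
level `i` (for all `k`, `π_{st}(k) ≤ i ↔ k ≤ i`), the restrictions of `π_{st}` to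
`{k : k ≤ i}` and `{k : k > i}` are independent.  Independence is expressed by the
factorization `P(A ∩ B ∩ E) · P(E) = P(A ∩ E) · P(B ∩ E)` for all events `A` depending
only on `π_{st}` below level `i` and `B` depending only on `π_{st}` above level `i`. -/
theorem gibbs_conditional_independence_across_empty_boundary
    (n : ℕ) (X Y : Fin n → ℝ) (V : ℝ → ℝ)
    (hX : Function.Injective X) (hY : Function.Injective Y)
    (s t : Equiv.Perm (Fin n))
    (hs : StrictMono fun k => X (s k)) (ht : StrictMono fun k => Y (t k))
    (i : Fin n)
    (w : Equiv.Perm (Fin n) → ℝ)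
    (hw : ∀ π : Equiv.Perm (Fin n),
      w π = Real.exp (-(∑ j : Fin n, V ((n : ℝ) * (X j - Y (π j))))))
    (πst : Equiv.Perm (Fin n) → Fin n → Fin n)
    (hπst : ∀ π k, πst π k = t.symm (π (s k)))
    (E : Set (Equiv.Perm (Fin n)))
    (hE : E = {π | ∀ k : Fin n, πst π k ≤ i ↔ k ≤ i})
    (A B : Equiv.Perm (Fin n) → Prop)
    (hA : ∀ π π' : Equiv.Perm (Fin n),
      (∀ k : Fin n, k ≤ i → πst π k = πst π' k) → (A π ↔ A π'))
    (hB : ∀ π π' : Equiv.Perm (Fin n),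
      (∀ k : Fin n, i < k → πst π k = πst π' k) → (B π ↔ B π')) :
    (∑ π : Equiv.Perm (Fin n), ({π | π ∈ E ∧ A π ∧ B π} : Set _).indicator w π)
        * (∑ π : Equiv.Perm (Fin n), (E : Set _).indicator w π)
      = (∑ π : Equiv.Perm (Fin n), ({π | π ∈ E ∧ A π} : Set _).indicator w π)
        * (∑ π : Equiv.Perm (Fin n), ({π | π ∈ E ∧ B π} : Set _).indicator w π) := by
  classical
  -- the reindexing equivalence `σ ↦ t * σ * s⁻¹`
  set e : Equiv.Perm (Fin n) ≃ Equiv.Perm (Fin n) :=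
    (Equiv.mulRight s⁻¹).trans (Equiv.mulLeft t) with he
  have he' : ∀ σ : Equiv.Perm (Fin n), e σ = t * σ * s⁻¹ := by
    intro σ
    simp [he, mul_assoc]
  have hπe : ∀ σ k, πst (e σ) k = σ k := by
    intro σ k
    rw [hπst, he']
    simp [Equiv.Perm.mul_apply]
  -- the factorized weight
  set g : Fin n → Fin n → ℝ :=
    fun k m => Real.exp (-(V ((n : ℝ) * (X (s k) - Y (t m))))) with hg
  have hwe : ∀ σ : Equiv.Perm (Fin n), w (e σ) = ∏ k, g k (σ k) := by
    intro σ
    rw [hw]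
    have hsum : (∑ j : Fin n, V ((n : ℝ) * (X j - Y ((e σ) j))))
        = ∑ k : Fin n, V ((n : ℝ) * (X (s k) - Y (t (σ k)))) := by
      rw [← Equiv.sum_comp s (fun j => V ((n : ℝ) * (X j - Y ((e σ) j))))]
      refine Finset.sum_congr rfl fun k _ => ?_
      rw [he']
      simp [Equiv.Perm.mul_apply]
    rw [hsum, ← Finset.sum_neg_distrib, Real.exp_sum]
  have hmemE : ∀ σ : Equiv.Perm (Fin n), e σ ∈ E ↔ ∀ k, σ k ≤ i ↔ k ≤ i := by
    intro σ
    rw [hE]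
    simp only [Set.mem_setOf_eq, hπe]
  have key : ∀ (S : Set (Equiv.Perm (Fin n))) (C : Equiv.Perm (Fin n) → Prop),
      (∀ σ, e σ ∈ S ↔ C σ) →
      (∑ π : Equiv.Perm (Fin n), S.indicator w π)
        = ∑ σ : Equiv.Perm (Fin n), if C σ then ∏ k, g k (σ k) else 0 := by
    intro S C hC
    rw [← Equiv.sum_comp e (fun π => S.indicator w π)]
    refine Finset.sum_congr rfl fun σ _ => ?_
    rw [Set.indicator_apply, hwe]
    exact if_congr (hC σ) rfl rfl
  rw [key {π | π ∈ E ∧ A π ∧ B π}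
        (fun σ => (∀ k, σ k ≤ i ↔ k ≤ i) ∧ A (e σ) ∧ B (e σ))
        (fun σ => by simp only [Set.mem_setOf_eq, hmemE]),
      key E (fun σ => (∀ k, σ k ≤ i ↔ k ≤ i)) hmemE,
      key {π | π ∈ E ∧ A π} (fun σ => (∀ k, σ k ≤ i ↔ k ≤ i) ∧ A (e σ))
        (fun σ => by simp only [Set.mem_setOf_eq, hmemE]),
      key {π | π ∈ E ∧ B π} (fun σ => (∀ k, σ k ≤ i ↔ k ≤ i) ∧ B (e σ))
        (fun σ => by simp only [Set.mem_setOf_eq, hmemE])]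
  have hA1 : ∀ σ σ' : Equiv.Perm (Fin n),
      (∀ k, k ≤ i → σ k = σ' k) → (A (e σ) ↔ A (e σ')) := by
    intro σ σ' hlow
    refine hA _ _ fun k hk => ?_
    rw [hπe, hπe]
    exact hlow k hk
  have hB1 : ∀ σ σ' : Equiv.Perm (Fin n),
      (∀ k, i < k → σ k = σ' k) → (B (e σ) ↔ B (e σ')) := by
    intro σ σ' hhigh
    refine hB _ _ fun k hk => ?_
    rw [hπe, hπe]
    exact hhigh k hk
  have H := core i g (fun σ => A (e σ)) (fun σ => B (e σ)) hA1 hB1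
  convert H using 2 <;> (refine Finset.sum_congr rfl fun σ _ => ?_; congr)
end

section
/- Let π: ℤ → ℤ be a bijection and for a ∈ ℤ define L_a(π) = #{(i,j) : i ≤ a < j, π(i) = j} and R_a(π) = #{(i,j) : j ≤ a < i, π(i) = j}. Suppose L_a(π) and R_a(π) are finite for all a. Then the flow F_a(π) := L_a(π) - R_a(π) is constant in a, i.e., F_{a-1}(π) = F_a(π) for every a ∈ ℤ. -/
/-!
With `b = π⁻¹ a`, each of the four crossing sets in the statement is one of
`{i | i ≤ a ≤ π i}` and `{i | a ≤ i ∧ π i ≤ a}` with `a` or `b` removed, so `F_{a-1} - F_a`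
only depends on which of these two sets contain `a` and `b`. Each of `a`, `b` lies in at least
one of them, and `a` lies in both iff `π a = a` iff `b = a` iff `b` lies in both.
-/

namespace Equiv.Perm

variable (π : Equiv.Perm ℤ) (a : ℤ)

def weakUpCrossings : Set ℤ := {i | i ≤ a ∧ a ≤ π i}

def weakDownCrossings : Set ℤ := {i | a ≤ i ∧ π i ≤ a}

theorem upCrossings_pred_eq :
    {i : ℤ | i ≤ a - 1 ∧ a - 1 < π i} = π.weakUpCrossings a \ {a} := by
  ext i
  simp only [weakUpCrossings, Set.mem_sdiff, Set.mem_ofPred_eq, Set.mem_singleton_iff]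
  omega

theorem upCrossings_eq :
    {i : ℤ | i ≤ a ∧ a < π i} = π.weakUpCrossings a \ {π.symm a} := by
  ext i
  simp only [weakUpCrossings, Set.mem_sdiff, Set.mem_ofPred_eq, Set.mem_singleton_iff,
    eq_symm_apply]
  omega

theorem downCrossings_pred_eq :
    {i : ℤ | a - 1 < i ∧ π i ≤ a - 1} = π.weakDownCrossings a \ {π.symm a} := by
  ext i
  simp only [weakDownCrossings, Set.mem_sdiff, Set.mem_ofPred_eq, Set.mem_singleton_iff,
    eq_symm_apply]
  omega

theorem downCrossings_eq :
    {i : ℤ | a < i ∧ π i ≤ a} = π.weakDownCrossings a \ {a} := by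
  ext i
  simp only [weakDownCrossings, Set.mem_sdiff, Set.mem_ofPred_eq, Set.mem_singleton_iff]
  omega

theorem weakUpCrossings_finite (hL : {i : ℤ | i ≤ a - 1 ∧ a - 1 < π i}.Finite) :
    (π.weakUpCrossings a).Finite :=
  (π.upCrossings_pred_eq a ▸ hL).of_sdiff (Set.finite_singleton a)

theorem weakDownCrossings_finite (hR : {i : ℤ | a < i ∧ π i ≤ a}.Finite) :
    (π.weakDownCrossings a).Finite :=
  (π.downCrossings_eq a ▸ hR).of_sdiff (Set.finite_singleton a)

open scoped Classical in
theorem ite_mem_weakCrossings_self_eq_symm :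
    ((if a ∈ π.weakUpCrossings a then 1 else 0 : ℤ) + if a ∈ π.weakDownCrossings a then 1 else 0)
      = (if π.symm a ∈ π.weakUpCrossings a then 1 else 0 : ℤ)
        + if π.symm a ∈ π.weakDownCrossings a then 1 else 0 := by
  have hfix : π a = a ↔ π.symm a = a := by rw [symm_apply_eq, eq_comm]
  simp only [weakUpCrossings, weakDownCrossings, Set.mem_ofPred_eq, le_refl, true_and,
    and_true, apply_symm_apply]
  split_ifs <;> omega

end Equiv.Perm

open scoped Classical in
theorem Set.cast_ncard_sdiff_singleton {α : Type*} {s : Set α} (hs : s.Finite) (x : α) :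
    ((s \ {x}).ncard : ℤ) = s.ncard - if x ∈ s then 1 else 0 := by
  split_ifs with hx
  · rw [← Set.ncard_sdiff_singleton_add_one hx hs]
    push_cast
    ring
  · rw [Set.sdiff_singleton_eq_self hx, sub_zero]

/-- For a bijection `π : ℤ → ℤ` with `L_a(π) = #{i ≤ a : π i > a}` and
`R_a(π) = #{i > a : π i ≤ a}` finite for every `a`, the flow `F_a(π) = L_a(π) - R_a(π)`
is constant in `a`: `F_{a-1}(π) = F_a(π)` for every `a ∈ ℤ`. -/
theorem flow_constant (π : Equiv.Perm ℤ)
    (hL : ∀ a : ℤ, {i : ℤ | i ≤ a ∧ a < π i}.Finite)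
    (hR : ∀ a : ℤ, {i : ℤ | a < i ∧ π i ≤ a}.Finite) :
    ∀ a : ℤ,
      ({i : ℤ | i ≤ a - 1 ∧ a - 1 < π i}.ncard : ℤ)
        - ({i : ℤ | a - 1 < i ∧ π i ≤ a - 1}.ncard : ℤ)
      = ({i : ℤ | i ≤ a ∧ a < π i}.ncard : ℤ)
        - ({i : ℤ | a < i ∧ π i ≤ a}.ncard : ℤ) := by
  intro a
  have hup := π.weakUpCrossings_finite a (hL (a - 1))
  have hdown := π.weakDownCrossings_finite a (hR a)
  rw [π.upCrossings_pred_eq, π.downCrossings_pred_eq, π.upCrossings_eq, π.downCrossings_eq,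
    Set.cast_ncard_sdiff_singleton hup, Set.cast_ncard_sdiff_singleton hup,
    Set.cast_ncard_sdiff_singleton hdown, Set.cast_ncard_sdiff_singleton hdown]
  linarith [π.ite_mem_weakCrossings_self_eq_symm a]
end

section
/- Let X, Y: ℤ → ℝ be strictly increasing and let π be any bijection of ℤ with finite flow quantities L_a(π), R_a(π) for all a. If π is obtained from another such bijection π' by transposing the images of two indices (i.e., π(i) = π'(j), π(j) = π'(i), and π = π' elsewhere), then L_a(π) - R_a(π) = L_a(π') - R_a(π') for every a ∈ ℤ; that is, the flow F_a is invariant under transpositions. -/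
open Classical in
lemma card_split_aux (S : Finset ℤ) (i j : ℤ) (hij : i ≠ j) :
    (S.card : ℤ) = ((S \ {i, j}).card : ℤ)
      + (if i ∈ S then 1 else 0) + (if j ∈ S then 1 else 0) := by
  have h : (S ∩ {i, j}).card = (if i ∈ S then 1 else 0) + (if j ∈ S then 1 else 0) := by
    by_cases hi : i ∈ S <;> by_cases hj : j ∈ S
    · have h3 : S ∩ {i, j} = {i, j} := by
        ext k; simp only [Finset.mem_inter, Finset.mem_insert, Finset.mem_singleton]
        constructor
        · rintro ⟨_, h⟩; exact h
        · rintro (rfl | rfl) <;> simp [hi, hj]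
      rw [h3, Finset.card_insert_of_notMem (by simp [hij]), Finset.card_singleton]
      simp [hi, hj]
    · have h3 : S ∩ {i, j} = {i} := by
        ext k; simp only [Finset.mem_inter, Finset.mem_insert, Finset.mem_singleton]
        constructor
        · rintro ⟨hk, rfl | rfl⟩ <;> simp_all
        · rintro rfl; simp [hi]
      rw [h3]; simp [hi, hj]
    · have h3 : S ∩ {i, j} = {j} := by
        ext k; simp only [Finset.mem_inter, Finset.mem_insert, Finset.mem_singleton]
        constructor
        · rintro ⟨hk, rfl | rfl⟩ <;> simp_all
        · rintro rfl; simp [hj]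
      rw [h3]; simp [hi, hj]
    · have h3 : S ∩ {i, j} = ∅ := by
        ext k
        simp only [Finset.mem_inter, Finset.mem_insert, Finset.mem_singleton,
          Finset.notMem_empty, iff_false]
        rintro ⟨hk, rfl | rfl⟩ <;> simp_all
      rw [h3]; simp [hi, hj]
  have h2 : S.card = (S \ {i, j}).card + (S ∩ {i, j}).card :=
    (Finset.card_sdiff_add_card_inter S {i, j}).symm
  rw [h] at h2
  push_cast [h2]; ring

/-- The flow `F_a(π) = L_a(π) - R_a(π)` of a bijection `π : ℤ → ℤ`, where
`L_a(π) = #{k ≤ a : π k > a}` and `R_a(π) = #{k > a : π k ≤ a}`, is invariant under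
transposing the images of two indices: if `π = π' ∘ (swap i j)` and all the counts are
finite, then `L_a(π) - R_a(π) = L_a(π') - R_a(π')` for every `a`. -/
theorem flow_invariant_under_transposition (π' : Equiv.Perm ℤ) (i j : ℤ) (hij : i ≠ j)
    (π : Equiv.Perm ℤ) (hπ : π = (Equiv.swap i j).trans π')
    (hL : ∀ a : ℤ, {k : ℤ | k ≤ a ∧ a < π k}.Finite)
    (hR : ∀ a : ℤ, {k : ℤ | a < k ∧ π k ≤ a}.Finite)
    (hL' : ∀ a : ℤ, {k : ℤ | k ≤ a ∧ a < π' k}.Finite)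
    (hR' : ∀ a : ℤ, {k : ℤ | a < k ∧ π' k ≤ a}.Finite) :
    ∀ a : ℤ,
      ({k : ℤ | k ≤ a ∧ a < π k}.ncard : ℤ) - ({k : ℤ | a < k ∧ π k ≤ a}.ncard : ℤ)
      = ({k : ℤ | k ≤ a ∧ a < π' k}.ncard : ℤ)
        - ({k : ℤ | a < k ∧ π' k ≤ a}.ncard : ℤ) := by
  intro a
  classical
  have hπi : π i = π' j := by rw [hπ]; simp [Equiv.swap_apply_left]
  have hπj : π j = π' i := by rw [hπ]; simp [Equiv.swap_apply_right]
  have hπk : ∀ k : ℤ, k ≠ i → k ≠ j → π k = π' k := by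
    intro k hki hkj
    rw [hπ]; simp [Equiv.swap_apply_of_ne_of_ne hki hkj]
  set A := (hL a).toFinset with hA
  set B := (hR a).toFinset with hB
  set A' := (hL' a).toFinset with hA'
  set B' := (hR' a).toFinset with hB'
  rw [Set.ncard_eq_toFinset_card _ (hL a), Set.ncard_eq_toFinset_card _ (hR a),
    Set.ncard_eq_toFinset_card _ (hL' a), Set.ncard_eq_toFinset_card _ (hR' a)]
  have hAeq : A \ {i, j} = A' \ {i, j} := by
    ext k
    simp only [Finset.mem_sdiff, Finset.mem_insert, Finset.mem_singleton, hA, hA',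
      Set.Finite.mem_toFinset, Set.mem_setOf_eq, not_or]
    constructor
    · rintro ⟨⟨h1, h2⟩, hki, hkj⟩
      rw [hπk k hki hkj] at h2; exact ⟨⟨h1, h2⟩, hki, hkj⟩
    · rintro ⟨⟨h1, h2⟩, hki, hkj⟩
      rw [← hπk k hki hkj] at h2; exact ⟨⟨h1, h2⟩, hki, hkj⟩
  have hBeq : B \ {i, j} = B' \ {i, j} := by
    ext k
    simp only [Finset.mem_sdiff, Finset.mem_insert, Finset.mem_singleton, hB, hB',
      Set.Finite.mem_toFinset, Set.mem_setOf_eq, not_or]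
    constructor
    · rintro ⟨⟨h1, h2⟩, hki, hkj⟩
      rw [hπk k hki hkj] at h2; exact ⟨⟨h1, h2⟩, hki, hkj⟩
    · rintro ⟨⟨h1, h2⟩, hki, hkj⟩
      rw [← hπk k hki hkj] at h2; exact ⟨⟨h1, h2⟩, hki, hkj⟩
  rw [card_split_aux A i j hij, card_split_aux B i j hij,
    card_split_aux A' i j hij, card_split_aux B' i j hij, hAeq, hBeq]
  have hiA : i ∈ A ↔ (i ≤ a ∧ a < π' j) := by simp [hA, Set.Finite.mem_toFinset, hπi]
  have hjA : j ∈ A ↔ (j ≤ a ∧ a < π' i) := by simp [hA, Set.Finite.mem_toFinset, hπj]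
  have hiB : i ∈ B ↔ (a < i ∧ π' j ≤ a) := by simp [hB, Set.Finite.mem_toFinset, hπi]
  have hjB : j ∈ B ↔ (a < j ∧ π' i ≤ a) := by simp [hB, Set.Finite.mem_toFinset, hπj]
  have hiA' : i ∈ A' ↔ (i ≤ a ∧ a < π' i) := by simp [hA', Set.Finite.mem_toFinset]
  have hjA' : j ∈ A' ↔ (j ≤ a ∧ a < π' j) := by simp [hA', Set.Finite.mem_toFinset]
  have hiB' : i ∈ B' ↔ (a < i ∧ π' i ≤ a) := by simp [hB', Set.Finite.mem_toFinset]
  have hjB' : j ∈ B' ↔ (a < j ∧ π' j ≤ a) := by simp [hB', Set.Finite.mem_toFinset]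
  simp only [hiA, hjA, hiB, hjB, hiA', hjA', hiB', hjB']
  split_ifs <;> omega
end
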